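/- arXiv:1407.0570 — 7 statements merged into one kernel-verified Lean document; each statement's English description precedes it below -/
import Mathlib

section
/- The number of permutations of length n avoiding the pattern 123 equals the n-th Catalan number binomial(2n, n)/(n+1). -/
/-- A pattern `π` (of length `k`) is contained in `σ` (of length `n`) if there is a
strictly increasing choice of positions whose values are ordered like `π`. -/
def PattContains {n k : ℕ} (σ : Fin n → Fin n) (π : Fin k → Fin k) : Prop :=
  ∃ f : Fin k → Fin n, StrictMono f ∧ ∀ i j : Fin k, π i < π j ↔ σ (f i) < σ (f j)

/-- `σ` avoids the pattern `π`. -/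
def PattAvoids {n k : ℕ} (σ : Fin n → Fin n) (π : Fin k → Fin k) : Prop :=
  ¬ PattContains σ π

/-!
A 123-avoiding permutation is determined by its prefix minima `m i = min_{j ≤ i} σ j`: a position
that is not a left-to-right minimum has a smaller value somewhere to its left, so the values at
such positions must decrease, and they are the values not taken by `m`. Conversely, for every
antitone `m` with `m i + i < n`, filling the remaining positions with the unused values in
decreasing order gives a 123-avoiding permutation with prefix minima `m`; the staircase bound is
what keeps these values above `m`. The staircase sequences with `m 0 ≤ j` satisfy the ballot
recursion (split on whether `m 0 = j`), so there are `C(n+j, j) - C(n+j, n+1)` of them, and for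
`j = n` this is `C(2n, n) / (n + 1)`.
-/

open Finset Function

section PrefixMin

variable {ι α : Type*} [LinearOrder ι] [LocallyFiniteOrderBot ι] [LinearOrder α]

def prefixMin (f : ι → α) (i : ι) : α := (Iic i).inf' nonempty_Iic f

def IsLeftToRightMin (f : ι → α) (i : ι) : Prop := ∀ j < i, f i < f j

variable {f : ι → α} {i j : ι}

lemma prefixMin_le (h : j ≤ i) : prefixMin f i ≤ f j := inf'_le f (mem_Iic.2 h)

lemma le_prefixMin_iff {a : α} : a ≤ prefixMin f i ↔ ∀ j ≤ i, a ≤ f j := by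
  simp [prefixMin]

lemma antitone_prefixMin (f : ι → α) : Antitone (prefixMin f) := fun _ _ h =>
  le_prefixMin_iff.2 fun _ hj => prefixMin_le (hj.trans h)

lemma Antitone.prefixMin_eq (hf : Antitone f) : prefixMin f = f :=
  funext fun _ => le_antisymm (prefixMin_le le_rfl) (le_prefixMin_iff.2 fun _ hj => hf hj)

lemma IsLeftToRightMin.prefixMin_eq (h : IsLeftToRightMin f i) : prefixMin f i = f i :=
  le_antisymm (prefixMin_le le_rfl) <| le_prefixMin_iff.2 fun j hj =>
    hj.lt_or_eq.elim (fun hj => (h j hj).le) fun hj => hj ▸ le_rfl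

/-- The first position at which the prefix minimum is attained is a left-to-right minimum. -/
lemma exists_isLeftToRightMin_eq_prefixMin (f : ι → α) (i : ι) :
    ∃ j ≤ i, IsLeftToRightMin f j ∧ f j = prefixMin f i := by
  classical
  set T := (Iic i).filter (fun j => f j = prefixMin f i)
  have hT : T.Nonempty := by
    obtain ⟨j, hj, he⟩ := exists_mem_eq_inf' (nonempty_Iic (a := i)) f
    exact ⟨j, mem_filter.2 ⟨hj, he.symm⟩⟩
  obtain ⟨hj, he⟩ := mem_filter.1 (T.min'_mem hT)
  refine ⟨T.min' hT, mem_Iic.1 hj, fun p hp => ?_, he⟩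
  have hpi : p ≤ i := hp.le.trans (mem_Iic.1 hj)
  refine he ▸ (prefixMin_le hpi).lt_of_ne fun hfp => ?_
  exact hp.not_ge (T.min'_le p (mem_filter.2 ⟨mem_Iic.2 hpi, hfp.symm⟩))

lemma isLeftToRightMin_prefixMin_iff :
    IsLeftToRightMin (prefixMin f) i ↔ IsLeftToRightMin f i := by
  refine ⟨fun h => ?_, fun h j hj => ?_⟩
  · obtain ⟨q, hqi, hq, hfq⟩ := exists_isLeftToRightMin_eq_prefixMin f i
    obtain rfl | hqi := hqi.eq_or_lt
    · exact hq
    · exact absurd (hfq ▸ prefixMin_le le_rfl) (h q hqi).not_ge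
  · obtain ⟨q, hqj, -, hfq⟩ := exists_isLeftToRightMin_eq_prefixMin f j
    rw [h.prefixMin_eq, ← hfq]
    exact h q (hqj.trans_lt hj)

end PrefixMin

variable {n : ℕ}

lemma prefixMin_add_lt {f : Fin n → Fin n} (hf : Injective f) (i : Fin n) :
    (prefixMin f i).val + i < n := by
  have hcard := card_le_card_of_injOn f (s := Iic i) (t := Ici (prefixMin f i))
    (fun j hj => mem_Ici.2 (prefixMin_le (mem_Iic.1 hj))) hf.injOn
  rw [Fin.card_Iic, Fin.card_Ici] at hcard
  have := (prefixMin f i).isLt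
  omega

lemma pattContains_012_iff {σ : Fin n → Fin n} :
    PattContains σ ![0, 1, 2] ↔ ∃ a b c, a < b ∧ b < c ∧ σ a < σ b ∧ σ b < σ c := by
  constructor
  · rintro ⟨f, hf, hp⟩
    exact ⟨f 0, f 1, f 2, hf (by decide), hf (by decide),
      (hp 0 1).1 (by decide), (hp 1 2).1 (by decide)⟩
  · rintro ⟨a, b, c, hab, hbc, h1, h2⟩
    refine ⟨![a, b, c], by simp [hab, hbc], fun i j => ?_⟩
    have h3 := h1.trans h2
    fin_cases i <;> fin_cases j <;> simp [h1, h2, h3, h1.le, h2.le, h3.le]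

lemma pattAvoids_012_of_strictAntiOn {σ : Fin n → Fin n} (s : Set (Fin n))
    (hs : StrictAntiOn σ s) (hsc : StrictAntiOn σ sᶜ) : PattAvoids σ ![0, 1, 2] := by
  rw [PattAvoids, pattContains_012_iff]
  rintro ⟨a, b, c, hab, hbc, h1, h2⟩
  have split : ∀ x y, x < y → σ x < σ y → (x ∈ s ↔ y ∉ s) := fun x y hxy h => by
    by_cases hx : x ∈ s <;> by_cases hy : y ∈ s
    exacts [absurd h (hs hx hy hxy).not_gt, iff_of_true hx hy, iff_of_false hx (not_not.2 hy),
      absurd h (hsc hx hy hxy).not_gt]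
  have := split a b hab h1
  have := split b c hbc h2
  have := split a c (hab.trans hbc) (h1.trans h2)
  tauto

lemma PattAvoids.strictAntiOn_not_isLeftToRightMin {σ : Fin n → Fin n}
    (h : PattAvoids σ ![0, 1, 2]) (hσ : Injective σ) :
    StrictAntiOn σ {i | ¬IsLeftToRightMin σ i} := by
  intro i hi j _ hij
  obtain ⟨p, hpi, hp⟩ : ∃ p < i, σ p ≤ σ i := by simpa [IsLeftToRightMin] using hi
  refine lt_of_not_ge fun hle => h (pattContains_012_iff.2 ⟨p, i, j, hpi, hij, ?_, ?_⟩)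
  · exact hp.lt_of_ne (hσ.ne hpi.ne)
  · exact hle.lt_of_ne (hσ.ne hij.ne)

theorem PattAvoids.eq_of_prefixMin_eq {σ τ : Equiv.Perm (Fin n)} (hσ : PattAvoids σ ![0, 1, 2])
    (hτ : PattAvoids τ ![0, 1, 2]) (h : prefixMin σ = prefixMin τ) : σ = τ := by
  set L := {i | IsLeftToRightMin σ i}
  have hL (i) : IsLeftToRightMin τ i ↔ IsLeftToRightMin σ i := by
    rw [← isLeftToRightMin_prefixMin_iff, ← h, isLeftToRightMin_prefixMin_iff]
  have hagree : Set.EqOn σ τ L := fun i hi => by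
    rw [← (show IsLeftToRightMin σ i from hi).prefixMin_eq, h, ((hL i).2 hi).prefixMin_eq]
  have hanti_σ : StrictAnti (Lᶜ.domRestrict σ) := fun a b hab =>
    hσ.strictAntiOn_not_isLeftToRightMin σ.injective a.2 b.2 hab
  have hanti_τ : StrictAnti (Lᶜ.domRestrict τ) := fun a b hab =>
    hτ.strictAntiOn_not_isLeftToRightMin τ.injective (mt (hL a).1 a.2) (mt (hL b).1 b.2) hab
  have hcompl : Set.EqOn σ τ Lᶜ := by
    rw [← Set.domRestrict_eq_domRestrict_iff, ← hanti_σ.range_inj hanti_τ,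
      Set.range_domRestrict, Set.range_domRestrict, Set.image_compl_eq σ.bijective,
      Set.image_compl_eq τ.bijective, hagree.image_eq]
  ext i
  by_cases hi : i ∈ L
  exacts [congrArg _ (hagree hi), congrArg _ (hcompl hi)]

lemma exists_strictAnti_of_card_le {α β : Type*} [LinearOrder α] [LinearOrder β] [Finite α]
    [Finite β] (h : Nat.card α ≤ Nat.card β) : ∃ g : α → β, StrictAnti g := by
  cases nonempty_fintype α
  cases nonempty_fintype β
  rw [Nat.card_eq_fintype_card, Nat.card_eq_fintype_card] at h
  exact ⟨fun a => monoEquivOfFin β rfl (Fin.castLE h ((monoEquivOfFin α rfl).symm a).rev),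
    (monoEquivOfFin β rfl).strictMono.comp_strictAnti <|
      (Fin.strictMono_castLE h).comp_strictAnti <|
        Fin.rev_strictAnti.comp_strictMono (monoEquivOfFin α rfl).symm.strictMono⟩

section FillNonMinima

open scoped Classical in
noncomputable def fillNonMinima (m : Fin n → Fin n) (g : {i | ¬IsLeftToRightMin m i} → Fin n)
    (i : Fin n) : Fin n :=
  if h : IsLeftToRightMin m i then m i else g ⟨i, h⟩

variable {m : Fin n → Fin n} {g : {i | ¬IsLeftToRightMin m i} → Fin n}

lemma fillNonMinima_of_isLeftToRightMin {i : Fin n} (h : IsLeftToRightMin m i) :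
    fillNonMinima m g i = m i :=
  dif_pos h

lemma fillNonMinima_of_not_isLeftToRightMin {i : Fin n} (h : ¬IsLeftToRightMin m i) :
    fillNonMinima m g i = g ⟨i, h⟩ :=
  dif_neg h

lemma strictAntiOn_fillNonMinima_isLeftToRightMin :
    StrictAntiOn (fillNonMinima m g) {i | IsLeftToRightMin m i} := fun i hi j hj hij => by
  rw [fillNonMinima_of_isLeftToRightMin hi, fillNonMinima_of_isLeftToRightMin hj]
  exact hj i hij

variable (hg : StrictAnti g) (hgm : ∀ i, g i ∉ Set.range m)
include hg

lemma strictAntiOn_fillNonMinima_compl :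
    StrictAntiOn (fillNonMinima m g) {i | IsLeftToRightMin m i}ᶜ := fun i hi j hj hij => by
  rw [fillNonMinima_of_not_isLeftToRightMin hi, fillNonMinima_of_not_isLeftToRightMin hj]
  exact hg hij

include hgm

lemma injective_fillNonMinima : Injective (fillNonMinima m g) := by
  have mixed : ∀ i j, IsLeftToRightMin m i → ¬IsLeftToRightMin m j →
      fillNonMinima m g i ≠ fillNonMinima m g j := fun i j hi hj he => by
    rw [fillNonMinima_of_isLeftToRightMin hi, fillNonMinima_of_not_isLeftToRightMin hj] at he
    exact hgm _ ⟨i, he⟩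
  intro i j he
  by_cases hi : IsLeftToRightMin m i <;> by_cases hj : IsLeftToRightMin m j
  · exact strictAntiOn_fillNonMinima_isLeftToRightMin.injOn hi hj he
  · exact absurd he (mixed i j hi hj)
  · exact absurd he.symm (mixed j i hj hi)
  · exact (strictAntiOn_fillNonMinima_compl hg).injOn hi hj he

/-- If the value at a position `j` that is not a left-to-right minimum were below `m j`, then all
positions from `j` on would carry distinct values below `m j`, exceeding the staircase bound. -/
lemma lt_fillNonMinima (hst : ∀ i, (m i).val + i < n) {j : Fin n}
    (hj : ¬IsLeftToRightMin m j) : m j < fillNonMinima m g j := by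
  have hne : fillNonMinima m g j ≠ m j := by
    rw [fillNonMinima_of_not_isLeftToRightMin hj]
    exact fun he => hgm _ ⟨j, he.symm⟩
  refine lt_of_not_ge fun hle => ?_
  have hmaps : Set.MapsTo (fillNonMinima m g) (Ici j) (Iio (m j)) := fun i hi => by
    obtain rfl | hji := (mem_Ici.1 hi).eq_or_lt
    · exact mem_Iio.2 (hle.lt_of_ne hne)
    by_cases hi : IsLeftToRightMin m i
    · rw [mem_coe, mem_Iio, fillNonMinima_of_isLeftToRightMin hi]
      exact hi j hji
    · exact mem_Iio.2 (((strictAntiOn_fillNonMinima_compl hg) hj hi hji).trans_le hle)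
  have hcard := card_le_card_of_injOn _ hmaps (injective_fillNonMinima hg hgm).injOn
  rw [Fin.card_Ici, Fin.card_Iio] at hcard
  have := hst j
  omega

lemma prefixMin_fillNonMinima (hm : Antitone m) (hst : ∀ i, (m i).val + i < n) :
    prefixMin (fillNonMinima m g) = m := by
  have le_fill (j : Fin n) : m j ≤ fillNonMinima m g j := by
    by_cases hj : IsLeftToRightMin m j
    · exact (fillNonMinima_of_isLeftToRightMin hj).ge
    · exact (lt_fillNonMinima hg hgm hst hj).le
  funext i
  obtain ⟨q, hqi, hq, hmq⟩ := exists_isLeftToRightMin_eq_prefixMin m i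
  rw [hm.prefixMin_eq] at hmq
  refine le_antisymm ?_ (le_prefixMin_iff.2 fun j hj => (hm hj).trans (le_fill j))
  exact hmq ▸ fillNonMinima_of_isLeftToRightMin (g := g) hq ▸ prefixMin_le hqi

end FillNonMinima

theorem exists_perm_pattAvoids_prefixMin_eq {m : Fin n → Fin n} (hm : Antitone m)
    (hst : ∀ i, (m i).val + i < n) :
    ∃ σ : Equiv.Perm (Fin n), PattAvoids σ ![0, 1, 2] ∧ prefixMin σ = m := by
  have hrange : Set.range m = m '' {i | IsLeftToRightMin m i} := by
    refine (Set.image_subset_range _ _).antisymm' ?_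
    rintro _ ⟨i, rfl⟩
    obtain ⟨q, -, hq, hmq⟩ := exists_isLeftToRightMin_eq_prefixMin m i
    exact ⟨q, hq, hmq.trans (congrFun hm.prefixMin_eq i)⟩
  have hcard : Nat.card {i | ¬IsLeftToRightMin m i} ≤ Nat.card ↥(Set.range m)ᶜ := by
    rw [Nat.card_coe_set_eq, Nat.card_coe_set_eq, ← Set.compl_ofPred]
    have h1 := Set.ncard_add_ncard_compl {i | IsLeftToRightMin m i}
    have h2 := Set.ncard_add_ncard_compl (Set.range m)
    have h3 : (Set.range m).ncard ≤ {i | IsLeftToRightMin m i}.ncard :=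
      hrange ▸ Set.ncard_image_le
    omega
  obtain ⟨g, hg⟩ := exists_strictAnti_of_card_le hcard
  have hg' : StrictAnti fun i => (g i : Fin n) := (Subtype.strictMono_coe _).comp_strictAnti hg
  have hgm (i) : (g i : Fin n) ∉ Set.range m := (g i).2
  refine ⟨Equiv.ofBijective _ (Finite.injective_iff_bijective.1
    (injective_fillNonMinima hg' hgm)), ?_, prefixMin_fillNonMinima hg' hgm hm hst⟩
  exact pattAvoids_012_of_strictAntiOn _ strictAntiOn_fillNonMinima_isLeftToRightMin
    (strictAntiOn_fillNonMinima_compl hg')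

lemma Fin.antitone_cons_iff {α : Type*} [Preorder α] {a : α} {f : Fin n → α} :
    Antitone (Fin.cons a f : Fin (n + 1) → α) ↔ (∀ i, f i ≤ a) ∧ Antitone f := by
  rw [antitone_iff_forall_lt, antitone_iff_forall_lt]
  exact Fin.liftFun_cons (· ≥ ·)

def cappedStaircases (n j : ℕ) : Set (Fin n → ℕ) :=
  {m | Antitone m ∧ (∀ i, m i + i < n) ∧ ∀ i, m i ≤ j}

lemma cappedStaircases_finite (n j : ℕ) : (cappedStaircases n j).Finite :=
  (Set.Finite.pi fun _ => Set.finite_Iic j).subset fun _ hm i _ => hm.2.2 i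

lemma ncard_cappedStaircases_zero_left (j : ℕ) : (cappedStaircases 0 j).ncard = 1 :=
  Set.ncard_eq_one.2 ⟨finZeroElim, Set.ext fun _ => ⟨fun _ => Subsingleton.elim _ _,
    fun _ => ⟨fun a => a.elim0, fun i => i.elim0, fun i => i.elim0⟩⟩⟩

lemma ncard_cappedStaircases_zero_right (n : ℕ) : (cappedStaircases n 0).ncard = 1 :=
  Set.ncard_eq_one.2 ⟨0, Set.ext fun m => by
    refine ⟨fun hm => funext fun i => Nat.le_zero.1 (hm.2.2 i), ?_⟩
    rintro rfl
    exact ⟨antitone_const, fun i => by simp, fun _ => le_rfl⟩⟩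

lemma cappedStaircases_self (n : ℕ) :
    cappedStaircases (n + 1) (n + 1) = cappedStaircases (n + 1) n :=
  Set.ext fun m => and_congr_right fun _ => and_congr_right fun hst =>
    ⟨fun _ i => by have := hst i; omega, fun h i => (h i).trans n.le_succ⟩

lemma cappedStaircases_succ_succ {n j : ℕ} (hj : j < n) :
    cappedStaircases (n + 1) (j + 1) =
      cappedStaircases (n + 1) j ∪ Fin.cons (j + 1) '' cappedStaircases n (j + 1) := by
  ext m
  constructor
  · rintro ⟨hanti, hst, hcap⟩
    by_cases h0 : m 0 ≤ j
    · exact Or.inl ⟨hanti, hst, fun i => (hanti (Fin.zero_le i)).trans h0⟩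
    refine Or.inr ⟨Fin.tail m, ⟨fun a b h => hanti (Fin.succ_le_succ_iff.2 h),
      fun i => ?_, fun i => hcap _⟩, ?_⟩
    · have := hst i.succ
      simp only [Fin.val_succ] at this
      simp only [Fin.tail]
      omega
    · rw [show j + 1 = m 0 by have := hcap 0; omega, Fin.cons_self_tail]
  · rintro (⟨hanti, hst, hcap⟩ | ⟨t, ⟨hanti, hst, hcap⟩, rfl⟩)
    · exact ⟨hanti, hst, fun i => (hcap i).trans j.le_succ⟩
    refine ⟨Fin.antitone_cons_iff.2 ⟨hcap, hanti⟩, Fin.cases ?_ fun i => ?_,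
      Fin.cases le_rfl hcap⟩
    · simpa using hj
    · have := hst i
      simp only [Fin.cons_succ, Fin.val_succ]
      omega

lemma ncard_cappedStaircases_succ_succ {n j : ℕ} (hj : j < n) :
    (cappedStaircases (n + 1) (j + 1)).ncard =
      (cappedStaircases (n + 1) j).ncard + (cappedStaircases n (j + 1)).ncard := by
  have hdisj : Disjoint (cappedStaircases (n + 1) j)
      (Fin.cons (j + 1) '' cappedStaircases n (j + 1)) := by
    refine Set.disjoint_left.2 ?_
    rintro _ ⟨-, -, hcap⟩ ⟨t, -, rfl⟩
    simpa using hcap 0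
  rw [cappedStaircases_succ_succ hj, Set.ncard_union_eq hdisj (cappedStaircases_finite _ _)
    ((cappedStaircases_finite _ _).image _),
    Set.ncard_image_of_injective _ (Fin.cons_right_injective _)]

theorem ncard_cappedStaircases_add_choose {n j : ℕ} (h : j ≤ n) :
    (cappedStaircases n j).ncard + (n + j).choose (n + 1) = (n + j).choose j := by
  induction n generalizing j with
  | zero =>
    obtain rfl := Nat.le_zero.1 h
    simp [ncard_cappedStaircases_zero_left]
  | succ n ihn =>
    induction j with
    | zero => simp [ncard_cappedStaircases_zero_right]
    | succ j ihj =>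
      have pascal₁ := Nat.choose_succ_succ' (n + 1 + j) j
      have pascal₂ := Nat.choose_succ_succ' (n + 1 + j) (n + 1)
      have ih := ihj (by omega)
      rw [show n + 1 + (j + 1) = n + 1 + j + 1 by ring]
      obtain hj | rfl := Nat.lt_or_eq_of_le (Nat.le_of_succ_le_succ h)
      · have ih' := ihn (j := j + 1) hj
        rw [show n + (j + 1) = n + 1 + j by ring] at ih'
        rw [ncard_cappedStaircases_succ_succ hj]
        omega
      · rw [cappedStaircases_self]
        omega

theorem ncard_cappedStaircases_self (n : ℕ) :
    (cappedStaircases n n).ncard = (2 * n).choose n / (n + 1) := by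
  have key := ncard_cappedStaircases_add_choose (le_refl n)
  rw [← two_mul] at key
  have hsucc := Nat.choose_succ_right_eq (2 * n) n
  rw [show 2 * n - n = n by omega] at hsucc
  refine (Nat.div_eq_of_eq_mul_left n.succ_pos ?_).symm
  have := congrArg (· * (n + 1)) key
  simp only [add_mul, hsucc] at this
  linarith

def prefixMinStaircase (n : ℕ) (σ : {σ : Equiv.Perm (Fin n) // PattAvoids σ ![0, 1, 2]}) :
    cappedStaircases n n :=
  ⟨fun i => (prefixMin (σ.1 : Fin n → Fin n) i).val,
    fun _ _ h => Fin.val_fin_le.2 (antitone_prefixMin _ h), prefixMin_add_lt σ.1.injective,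
    fun i => (prefixMin (σ.1 : Fin n → Fin n) i).isLt.le⟩

theorem bijective_prefixMinStaircase (n : ℕ) : Bijective (prefixMinStaircase n) := by
  refine ⟨fun σ τ h => Subtype.ext (σ.2.eq_of_prefixMin_eq τ.2 (funext fun i =>
    Fin.ext (congrFun (congrArg Subtype.val h) i))), ?_⟩
  rintro ⟨m, hanti, hst, -⟩
  obtain ⟨σ, hσ, hm⟩ := exists_perm_pattAvoids_prefixMin_eq
    (m := fun i => ⟨m i, by have := hst i; omega⟩) (fun _ _ h => hanti h) hst
  exact ⟨⟨σ, hσ⟩, Subtype.ext (funext fun i => congrArg Fin.val (congrFun hm i))⟩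

theorem av_123_catalan (n : ℕ) :
    Nat.card {σ : Equiv.Perm (Fin n) //
      PattAvoids (σ : Fin n → Fin n) (![0, 1, 2] : Fin 3 → Fin 3)} =
    Nat.choose (2 * n) n / (n + 1) := by
  rw [← ncard_cappedStaircases_self, ← Nat.card_coe_set_eq]
  exact Nat.card_eq_of_bijective _ (bijective_prefixMinStaircase n)
end

section
/- The bivariate function A(z,u) = (1 - 2zu - sqrt(1-4z))/(2(1 - u + z u^2)) satisfies the kernel equation (1 - u + z u^2)·A(z,u) = z·(1 - u + A(z,1)), where A(z,1) = (1 - sqrt(1-4z))/(2z) - 1. -/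
theorem mul_div_two_mul_cancel_left {K : Type*} [Field K] [NeZero (2 : K)] {k : K} (hk : k ≠ 0)
    (a : K) : k * (a / (2 * k)) = a / 2 := by
  field_simp

theorem mul_one_sub_add_catalan_shift {K : Type*} [Field K] [NeZero (2 : K)] {z : K}
    (hz : z ≠ 0) (u s : K) :
    z * (1 - u + ((1 - s) / (2 * z) - 1)) = (1 - 2 * z * u - s) / 2 := by
  field_simp
  ring

theorem bivariate_kernel_equation_general (z u : ℝ) (hz0 : 0 < z)
    (hk : 1 - u + z * u ^ 2 ≠ 0) :
    let A1 : ℝ := (1 - Real.sqrt (1 - 4 * z)) / (2 * z) - 1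
    let A : ℝ := (1 - 2 * z * u - Real.sqrt (1 - 4 * z)) / (2 * (1 - u + z * u ^ 2))
    (1 - u + z * u ^ 2) * A = z * (1 - u + A1) := by
  intro A1 A
  rw [mul_div_two_mul_cancel_left hk, mul_one_sub_add_catalan_shift hz0.ne']

theorem bivariate_kernel_equation (z u : ℝ) (hz0 : 0 < z) (hz : z < 1/4)
    (hk : 1 - u + z * u ^ 2 ≠ 0) :
    let A1 : ℝ := (1 - Real.sqrt (1 - 4 * z)) / (2 * z) - 1
    let A : ℝ := (1 - 2 * z * u - Real.sqrt (1 - 4 * z)) / (2 * (1 - u + z * u ^ 2))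
    (1 - u + z * u ^ 2) * A = z * (1 - u + A1) :=
  bivariate_kernel_equation_general z u hz0 hk
end

section
/- The generating function F(z) = (2 - 10z + 9z² + 7z³ - 4z⁴ - (2 - 8z + 9z² - 3z³)·sqrt(1-4z)) / ((1 - 3z + z²)·((1 - 5z + 4z²) + (1 - 3z)·sqrt(1-4z))) has a power series expansion at 0 whose first twelve coefficients (from z¹) are 1, 2, 6, 22, 89, 376, 1611, 6901, 29375, 123996, 518971, 2155145. -/
/-!
The square root is matched by its Taylor polynomial `T` to order `z ^ 13`, since
`T ^ 2 - (1 - 4z)` is divisible by `z ^ 13` while `√(1 - 4z) + T → 2`. Replacing the square root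
by `T`, the numerator of `Fgf - P` (for the claimed polynomial `P`) becomes a polynomial divisible
by `z ^ 13`, and the denominator tends to `2`; so `Fgf - P = O(z ^ 13)`. As `Fgf` is analytic at
`0`, uniqueness of asymptotic expansions identifies the coefficients of `P` with its Taylor
coefficients.
-/

/-- The generating function of Av(1234, 2341). -/
noncomputable def Fgf (z : ℝ) : ℝ :=
  (2 - 10*z + 9*z^2 + 7*z^3 - 4*z^4 - (2 - 8*z + 9*z^2 - 3*z^3) * Real.sqrt (1 - 4*z)) /
    ((1 - 3*z + z^2) * ((1 - 5*z + 4*z^2) + (1 - 3*z) * Real.sqrt (1 - 4*z)))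

open Filter Asymptotics Topology Finset

section PowerSeries

variable {𝕜 E : Type*} [NontriviallyNormedField 𝕜] [NormedAddCommGroup E] [NormedSpace 𝕜 E]

theorem eq_zero_of_sum_pow_smul_isBigO {c : ℕ → E} {n : ℕ}
    (h : (fun z : 𝕜 => ∑ i ∈ range n, z ^ i • c i) =O[𝓝[≠] 0] (· ^ n)) :
    ∀ k < n, c k = 0 := by
  induction n generalizing c with
  | zero => simp
  | succ n ih =>
    have hsplit (z : 𝕜) :
        ∑ i ∈ range (n + 1), z ^ i • c i = c 0 + z • ∑ i ∈ range n, z ^ i • c (i + 1) := by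
      simp only [sum_range_succ', smul_sum, smul_smul, pow_succ', pow_zero, one_smul, add_comm]
    have hc0 : c 0 = 0 := by
      have hcont : Continuous fun z : 𝕜 => ∑ i ∈ range (n + 1), z ^ i • c i := by fun_prop
      have hpow : Tendsto (fun z : 𝕜 => z ^ (n + 1)) (𝓝[≠] 0) (𝓝 0) :=
        ((continuous_pow (n + 1)).tendsto' 0 0 (by simp)).mono_left nhdsWithin_le_nhds
      refine tendsto_nhds_unique ?_ (h.trans_tendsto hpow)
      simpa [hsplit] using (hcont.tendsto 0).mono_left nhdsWithin_le_nhds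
    have hshift : (fun z : 𝕜 => ∑ i ∈ range n, z ^ i • c (i + 1)) =O[𝓝[≠] 0] (· ^ n) := by
      refine ((isBigO_refl (fun z : 𝕜 => z⁻¹) _).smul h).congr' ?_ ?_ <;>
        filter_upwards [self_mem_nhdsWithin] with z (hz : z ≠ 0)
      · rw [hsplit, hc0, zero_add, inv_smul_smul₀ hz]
      · rw [smul_eq_mul, pow_succ', inv_mul_cancel_left₀ hz]
    rintro (_ | k) hk
    · exact hc0
    · exact ih hshift k (by omega)

theorem HasFPowerSeriesAt.coeff_eq_of_isBigO {f : 𝕜 → E} {p : FormalMultilinearSeries 𝕜 𝕜 E}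
    {a : ℕ → E} {n : ℕ} (hf : HasFPowerSeriesAt f p 0)
    (h : (fun z => f z - ∑ i ∈ range n, z ^ i • a i) =O[𝓝 0] (· ^ n)) {k : ℕ} (hk : k < n) :
    p.coeff k = a k := by
  have hp : (fun z => f z - ∑ i ∈ range n, z ^ i • p.coeff i) =O[𝓝 0] (· ^ n) := by
    simpa [FormalMultilinearSeries.partialSum, ← norm_pow] using hf.isBigO_sub_partialSum_pow n
  refine sub_eq_zero.mp
    (eq_zero_of_sum_pow_smul_isBigO (𝕜 := 𝕜) (c := fun i => p.coeff i - a i) ?_ k hk)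
  refine ((h.sub hp).mono nhdsWithin_le_nhds).congr_left fun z => ?_
  simp only [sub_sub_sub_cancel_left, smul_sub, sum_sub_distrib]

theorem HasFPowerSeriesAt.exists_eq_tsum {f : 𝕜 → E} {p : FormalMultilinearSeries 𝕜 𝕜 E}
    (hf : HasFPowerSeriesAt f p 0) :
    ∃ ε > 0, ∀ z : 𝕜, ‖z‖ < ε → f z = ∑' n, z ^ n • p.coeff n := by
  obtain ⟨ε, hε, hsum⟩ := Metric.eventually_nhds_iff.mp hf.eventually_hasSum
  refine ⟨ε, hε, fun z hz => ?_⟩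
  simpa using (hsum (by simpa using hz)).tsum_eq.symm

end PowerSeries

section Asymptotics

variable {α 𝕜 : Type*} [NormedField 𝕜] {l : Filter α}

theorem Asymptotics.IsBigO.of_mul_eq_of_tendsto {f g k u : α → 𝕜} {c : 𝕜} (hk : k =O[l] u)
    (hg : Tendsto g l (𝓝 c)) (hc : c ≠ 0) (hfg : ∀ᶠ x in l, f x * g x = k x) : f =O[l] u := by
  have hf : (fun x => k x * (g x)⁻¹) =ᶠ[l] f := by
    filter_upwards [hfg, hg.eventually_ne hc] with x hx hne
    rw [← hx, mul_inv_cancel_right₀ hne]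
  exact (hk.mul ((hg.inv₀ hc).isBigO_one 𝕜)).congr' hf (.of_forall fun x => mul_one (u x))

theorem isBigO_pow_of_eq_pow_mul {f g : 𝕜 → 𝕜} {n : ℕ} (hg : ContinuousAt g 0)
    (hfg : ∀ z, f z = z ^ n * g z) : f =O[𝓝 0] (· ^ n) := by
  simpa [← funext hfg] using (isBigO_refl (· ^ n) (𝓝 (0 : 𝕜))).mul (hg.tendsto.isBigO_one 𝕜)

end Asymptotics

theorem Real.analyticAt_sqrt {x : ℝ} (hx : 0 < x) : AnalyticAt ℝ Real.sqrt x := by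
  have : AnalyticAt ℝ (fun y => Real.exp (Real.log y / 2)) x := by fun_prop (disch := exact hx)
  refine this.congr ?_
  filter_upwards [lt_mem_nhds hx] with y hy
  rw [Real.sqrt_eq_rpow, Real.rpow_def_of_pos hy, div_eq_mul_one_div]

@[fun_prop]
theorem AnalyticAt.sqrt {f : ℝ → ℝ} {x : ℝ} (hf : AnalyticAt ℝ f x) (hx : 0 < f x) :
    AnalyticAt ℝ (fun y => √(f y)) x :=
  (Real.analyticAt_sqrt hx).comp hf

theorem analyticAt_Fgf : AnalyticAt ℝ Fgf 0 := by
  unfold Fgf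
  fun_prop (disch := norm_num)

def FgfNum (z s : ℝ) : ℝ := 2 - 10*z + 9*z^2 + 7*z^3 - 4*z^4 - (2 - 8*z + 9*z^2 - 3*z^3) * s

def FgfDen (z s : ℝ) : ℝ := (1 - 3*z + z^2) * ((1 - 5*z + 4*z^2) + (1 - 3*z) * s)

theorem Fgf_eq_FgfNum_div_FgfDen (z : ℝ) : Fgf z = FgfNum z √(1 - 4*z) / FgfDen z √(1 - 4*z) := rfl

-- The Taylor polynomial of `√(1 - 4z) = 1 - 2 ∑_{k ≥ 1} catalan (k - 1) z ^ k` up to degree 12.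
def sqrtApprox (z : ℝ) : ℝ :=
  1 - 2*z - 2*z^2 - 4*z^3 - 10*z^4 - 28*z^5 - 84*z^6 - 264*z^7 - 858*z^8 - 2860*z^9
    - 9724*z^10 - 33592*z^11 - 117572*z^12

def FgfCoeff (n : ℕ) : ℝ :=
  [0, 1, 2, 6, 22, 89, 376, 1611, 6901, 29375, 123996, 518971, 2155145].getD n 0

def FgfTaylor (z : ℝ) : ℝ := ∑ i ∈ range 13, z ^ i • FgfCoeff i

theorem FgfTaylor_eq (z : ℝ) : FgfTaylor z = z + 2*z^2 + 6*z^3 + 22*z^4 + 89*z^5 + 376*z^6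
    + 1611*z^7 + 6901*z^8 + 29375*z^9 + 123996*z^10 + 518971*z^11 + 2155145*z^12 := by
  simp [FgfTaylor, FgfCoeff, sum_range_succ]
  ring

theorem sqrtApprox_sq_sub_isBigO :
    (fun z => sqrtApprox z ^ 2 - (1 - 4*z)) =O[𝓝 0] (· ^ 13) := by
  refine isBigO_pow_of_eq_pow_mul (g := fun z => 832048 + 1307504*z + 3090464*z^2
    + 8112468*z^3 + 22269520*z^4 + 62354656*z^5 + 175343168*z^6 + 488455968*z^7
    + 1325809056*z^8 + 3414962720*z^9 + 7898957248*z^10 + 13823175184*z^11) (by fun_prop)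
    fun z => ?_
  simp only [sqrtApprox]
  ring

theorem eventually_one_sub_four_mul_pos : ∀ᶠ z : ℝ in 𝓝 0, 0 < 1 - 4*z :=
  continuousAt_const.eventually_lt (by fun_prop) (by norm_num)

theorem sqrt_sub_sqrtApprox_isBigO :
    (fun z => √(1 - 4*z) - sqrtApprox z) =O[𝓝 0] (· ^ 13) := by
  have hcont : Continuous fun z => √(1 - 4*z) + sqrtApprox z := by
    unfold sqrtApprox; fun_prop
  refine sqrtApprox_sq_sub_isBigO.neg_left.of_mul_eq_of_tendsto (hcont.tendsto' 0 2 ?_)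
    two_ne_zero ?_
  · norm_num [sqrtApprox]
  · filter_upwards [eventually_one_sub_four_mul_pos] with z hz
    linear_combination Real.sq_sqrt hz.le

theorem FgfNum_sub_mul_FgfDen_sqrtApprox_isBigO :
    (fun z => FgfNum z (sqrtApprox z) - FgfTaylor z * FgfDen z (sqrtApprox z))
      =O[𝓝 0] (· ^ 13) := by
  refine isBigO_pow_of_eq_pow_mul (g := fun z => 16944648 - 69388632*z + 67421484*z^2
    - 6671008*z^3 + 7633284*z^4 + 12758512*z^5 + 14196614*z^6 - 39574232*z^7 - 458566520*z^8
    - 2861298058*z^9 - 15118395370*z^10 - 73891631840*z^11 - 345092439692*z^12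
    + 2133610811644*z^13 - 760154123820*z^14) (by fun_prop) fun z => ?_
  simp only [FgfNum, FgfDen, sqrtApprox, FgfTaylor_eq]
  ring

theorem Fgf_sub_FgfTaylor_isBigO : (fun z => Fgf z - FgfTaylor z) =O[𝓝 0] (· ^ 13) := by
  have hden : Tendsto (fun z => FgfDen z √(1 - 4*z)) (𝓝 0) (𝓝 2) := by
    have : Continuous fun z => FgfDen z √(1 - 4*z) := by unfold FgfDen; fun_prop
    exact this.tendsto' 0 2 (by norm_num [FgfDen])
  -- `FgfNum z s - FgfTaylor z * FgfDen z s` is affine in `s` with slope `-slope z`, so replacing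
  -- `√(1 - 4z)` by `sqrtApprox z` changes it by `slope z * (√(1 - 4z) - sqrtApprox z)`.
  set slope : ℝ → ℝ := fun z =>
    2 - 8*z + 9*z^2 - 3*z^3 + FgfTaylor z * (1 - 3*z + z^2) * (1 - 3*z)
  have hslope : Continuous slope := by simp only [slope, FgfTaylor_eq]; fun_prop
  have hnum := FgfNum_sub_mul_FgfDen_sqrtApprox_isBigO.sub
    (((hslope.tendsto 0).isBigO_one ℝ).mul sqrt_sub_sqrtApprox_isBigO |>.congr_right
      fun _ => one_mul _)
  refine hnum.of_mul_eq_of_tendsto hden two_ne_zero ?_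
  filter_upwards [hden.eventually_ne two_ne_zero] with z hz
  rw [Fgf_eq_FgfNum_div_FgfDen, sub_mul, div_mul_cancel₀ _ hz]
  simp only [FgfNum, FgfDen, slope]
  ring

theorem Fgf_coefficients :
    ∃ (a : ℕ → ℝ) (ε : ℝ), 0 < ε ∧
      (∀ z : ℝ, |z| < ε → Fgf z = ∑' n : ℕ, a n * z ^ n) ∧
      a 1 = 1 ∧ a 2 = 2 ∧ a 3 = 6 ∧ a 4 = 22 ∧ a 5 = 89 ∧ a 6 = 376 ∧
      a 7 = 1611 ∧ a 8 = 6901 ∧ a 9 = 29375 ∧ a 10 = 123996 ∧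
      a 11 = 518971 ∧ a 12 = 2155145 := by
  obtain ⟨p, hp⟩ := analyticAt_Fgf
  obtain ⟨ε, hε, hsum⟩ := hp.exists_eq_tsum
  have hcoeff {k : ℕ} (hk : k < 13) : p.coeff k = FgfCoeff k :=
    hp.coeff_eq_of_isBigO Fgf_sub_FgfTaylor_isBigO hk
  refine ⟨p.coeff, ε, hε, fun z hz => (hsum z hz).trans (tsum_congr fun n => mul_comm _ _), ?_⟩
  refine ⟨?_, ?_, ?_, ?_, ?_, ?_, ?_, ?_, ?_, ?_, ?_, ?_⟩ <;> rw [hcoeff (by norm_num)] <;> rfl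
end

section
/- The formal power series F(z) defined as the generating function root of the cubic (z - 3z² + 2z³) - (1 - 5z + 8z² - 5z³)·F + (2z - 5z² + 4z³)·F² + z³·F³ = 0 with F(0) = 0 has initial coefficients (from z¹) 1, 2, 6, 22, 88, 367, 1571, 6861, 30468, 137229, 625573, 2881230. -/
/-!
Rewrite the cubic as the fixed-point equation `F = Φ F`. Since `Φ F - Φ G` is divisible by
`X * (F - G)`, the map `Φ` is a contraction for the `X`-adic topology, so any power series `P` with
`Φ P ≡ P mod X ^ N` agrees with `F` modulo `X ^ N`. The polynomial whose coefficients are the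
claimed numbers is such an approximate fixed point for `N = 13`, which is a finite computation.
-/

open PowerSeries Function

namespace PowerSeries

variable {R : Type*} [CommRing R]

theorem X_pow_dvd_sub_of_isFixedPt {Φ : R⟦X⟧ → R⟦X⟧}
    (hΦ : ∀ n F G, (X : R⟦X⟧) ^ n ∣ F - G → X ^ (n + 1) ∣ Φ F - Φ G)
    {F P : R⟦X⟧} (hF : IsFixedPt Φ F) {N : ℕ} (hP : X ^ N ∣ Φ P - P) : X ^ N ∣ F - P := by
  suffices ∀ k ≤ N, (X : R⟦X⟧) ^ k ∣ F - P from this N le_rfl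
  intro k hk
  induction k with
  | zero => simp
  | succ k ih =>
    have hstep : X ^ (k + 1) ∣ Φ F - Φ P := hΦ k F P (ih (by omega))
    have hdefect : X ^ (k + 1) ∣ Φ P - P := (pow_dvd_pow X hk).trans hP
    have hsplit : F - P = (Φ F - Φ P) + (Φ P - P) := by rw [hF.eq]; ring
    rw [hsplit]
    exact dvd_add hstep hdefect

theorem coeff_ofNat_mul_X_pow (a n k : ℕ) [a.AtLeastTwo] :
    coeff n ((ofNat(a) : R⟦X⟧) * X ^ k) = if n = k then ofNat(a) else 0 := by
  rw [← map_ofNat C, coeff_C_mul_X_pow]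

end PowerSeries

section CubicGF

variable {R : Type*} [CommRing R]

noncomputable def cubicStep (F : R⟦X⟧) : R⟦X⟧ :=
  X - 3 * X ^ 2 + 2 * X ^ 3 + (5 * X - 8 * X ^ 2 + 5 * X ^ 3) * F
    + (2 * X - 5 * X ^ 2 + 4 * X ^ 3) * F ^ 2 + X ^ 3 * F ^ 3

theorem isFixedPt_cubicStep {F : R⟦X⟧}
    (hcubic : (X - 3 * X ^ 2 + 2 * X ^ 3)
        - (1 - 5 * X + 8 * X ^ 2 - 5 * X ^ 3) * F
        + (2 * X - 5 * X ^ 2 + 4 * X ^ 3) * F ^ 2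
        + X ^ 3 * F ^ 3 = 0) :
    IsFixedPt cubicStep F := by
  unfold IsFixedPt cubicStep
  linear_combination hcubic

theorem cubicStep_sub_cubicStep (F G : R⟦X⟧) :
    cubicStep F - cubicStep G = X * (F - G) * (5 - 8 * X + 5 * X ^ 2
      + (2 - 5 * X + 4 * X ^ 2) * (F + G) + X ^ 2 * (F ^ 2 + F * G + G ^ 2)) := by
  unfold cubicStep
  ring

theorem X_pow_succ_dvd_cubicStep_sub (n : ℕ) (F G : R⟦X⟧) (h : X ^ n ∣ F - G) :
    X ^ (n + 1) ∣ cubicStep F - cubicStep G := by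
  rw [cubicStep_sub_cubicStep, pow_succ', mul_assoc]
  exact mul_dvd_mul_left X (dvd_mul_of_dvd_left h _)

noncomputable def cubicApprox : R⟦X⟧ :=
  X + 2 * X ^ 2 + 6 * X ^ 3 + 22 * X ^ 4 + 88 * X ^ 5 + 367 * X ^ 6 + 1571 * X ^ 7
    + 6861 * X ^ 8 + 30468 * X ^ 9 + 137229 * X ^ 10 + 625573 * X ^ 11 + 2881230 * X ^ 12

-- The cofactor is `(cubicStep cubicApprox - cubicApprox) / X ^ 13`, found by expanding.
theorem X_pow_dvd_cubicStep_cubicApprox_sub :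
    (X : R⟦X⟧) ^ 13 ∣ cubicStep cubicApprox - cubicApprox :=
  ⟨13388094 - 4252022 * X + 35614161 * X ^ 2 + 134264719 * X ^ 3 + 506194690 * X ^ 4
    + 1926468000 * X ^ 5 + 7338095574 * X ^ 6 + 27703887327 * X ^ 7 + 102469825271 * X ^ 8
    + 365025466518 * X ^ 9 + 1213690611248 * X ^ 10 + 3496226698695 * X ^ 11
    + 6526644504667 * X ^ 12 - 14550743876793 * X ^ 13 + 80328934394694 * X ^ 14
    + 167013338366181 * X ^ 15 + 530314340580678 * X ^ 16 + 1825256596794870 * X ^ 17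
    + 6399036733666476 * X ^ 18 + 22343039670953859 * X ^ 19 + 76762755270890352 * X ^ 20
    + 256715640192171195 * X ^ 21 + 824252700567609333 * X ^ 22
    + 2487667293902340577 * X ^ 23 + 6800249282885456310 * X ^ 24
    + 15579557091659375100 * X ^ 25 + 23918491409316867000 * X ^ 26,
    by unfold cubicStep cubicApprox; ring⟩

theorem coeff_eq_coeff_cubicApprox {F : R⟦X⟧} (hF : IsFixedPt cubicStep F) {m : ℕ}
    (hm : m < 13) : coeff m F = coeff m cubicApprox := by
  have hdvd : X ^ 13 ∣ F - cubicApprox :=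
    X_pow_dvd_sub_of_isFixedPt X_pow_succ_dvd_cubicStep_sub hF
      X_pow_dvd_cubicStep_cubicApprox_sub
  rw [← sub_eq_zero, ← map_sub]
  exact X_pow_dvd_iff.mp hdvd m hm

end CubicGF

theorem cubic_gf_initial_coefficients_general (F : PowerSeries ℚ)
    (hcubic : (X - 3 * X ^ 2 + 2 * X ^ 3)
        - (1 - 5 * X + 8 * X ^ 2 - 5 * X ^ 3) * F
        + (2 * X - 5 * X ^ 2 + 4 * X ^ 3) * F ^ 2
        + X ^ 3 * F ^ 3 = 0) :
    PowerSeries.coeff 1 F = 1 ∧ PowerSeries.coeff 2 F = 2 ∧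
    PowerSeries.coeff 3 F = 6 ∧ PowerSeries.coeff 4 F = 22 ∧
    PowerSeries.coeff 5 F = 88 ∧ PowerSeries.coeff 6 F = 367 ∧
    PowerSeries.coeff 7 F = 1571 ∧ PowerSeries.coeff 8 F = 6861 ∧
    PowerSeries.coeff 9 F = 30468 ∧ PowerSeries.coeff 10 F = 137229 ∧
    PowerSeries.coeff 11 F = 625573 ∧ PowerSeries.coeff 12 F = 2881230 := by
  have hF := isFixedPt_cubicStep hcubic
  refine ⟨?_, ?_, ?_, ?_, ?_, ?_, ?_, ?_, ?_, ?_, ?_, ?_⟩ <;>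
    rw [coeff_eq_coeff_cubicApprox hF (by norm_num)] <;>
    simp [cubicApprox, coeff_X, coeff_ofNat_mul_X_pow]

theorem cubic_gf_initial_coefficients (F : PowerSeries ℚ)
    (h0 : PowerSeries.constantCoeff F = 0)
    (hcubic : (X - 3 * X ^ 2 + 2 * X ^ 3)
        - (1 - 5 * X + 8 * X ^ 2 - 5 * X ^ 3) * F
        + (2 * X - 5 * X ^ 2 + 4 * X ^ 3) * F ^ 2
        + X ^ 3 * F ^ 3 = 0) :
    PowerSeries.coeff 1 F = 1 ∧ PowerSeries.coeff 2 F = 2 ∧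
    PowerSeries.coeff 3 F = 6 ∧ PowerSeries.coeff 4 F = 22 ∧
    PowerSeries.coeff 5 F = 88 ∧ PowerSeries.coeff 6 F = 367 ∧
    PowerSeries.coeff 7 F = 1571 ∧ PowerSeries.coeff 8 F = 6861 ∧
    PowerSeries.coeff 9 F = 30468 ∧ PowerSeries.coeff 10 F = 137229 ∧
    PowerSeries.coeff 11 F = 625573 ∧ PowerSeries.coeff 12 F = 2881230 :=
  cubic_gf_initial_coefficients_general F hcubic
end

section
/- The quintic polynomial 2 - 41z + 101z² - 97z³ + 36z⁴ - 4z⁵ has a real root strictly between 5.19 and 5.20, and this is its greatest real root. -/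
/-!
The quintic is positive at 5.19, and all of its Taylor coefficients at 5.2 are negative, so it is
negative on `[5.2, ∞)`. By the intermediate value theorem it vanishes in `(5.19, 5.2)`, and the
largest zero in `[5.19, 5.2]` (a nonempty compact set) is then the greatest real root.
-/

open Set

theorem exists_greatest_zero_mem_Ioo_of_pos_of_neg_Ici {f : ℝ → ℝ} {a b : ℝ} (hab : a ≤ b)
    (hf : ContinuousOn f (Icc a b)) (ha : 0 < f a) (hb : ∀ y, b ≤ y → f y < 0) :
    ∃ x ∈ Ioo a b, f x = 0 ∧ ∀ y, f y = 0 → y ≤ x := by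
  obtain ⟨z, hz, hz0⟩ : 0 ∈ f '' Icc a b :=
    intermediate_value_Icc' hab hf ⟨(hb b le_rfl).le, ha.le⟩
  have hcompact : IsCompact (Icc a b ∩ f ⁻¹' {0}) :=
    isCompact_Icc.of_isClosed_subset (hf.preimage_isClosed_of_isClosed isClosed_Icc
      isClosed_singleton) inter_subset_left
  obtain ⟨x, ⟨hx, hx0⟩, hmax⟩ := hcompact.exists_isGreatest ⟨z, hz, hz0⟩
  have hxa : x ≠ a := by rintro rfl; exact ha.ne' hx0
  have hxb : x ≠ b := by rintro rfl; exact (hb x le_rfl).ne hx0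
  refine ⟨x, ⟨lt_of_le_of_ne hx.1 hxa.symm, lt_of_le_of_ne hx.2 hxb⟩, hx0, fun y hy => ?_⟩
  rcases le_or_gt y a with hya | hay
  · exact hya.trans hx.1
  · by_contra! hxy
    have hyb : y ≤ b := not_lt.1 fun hby => (hb y hby.le).ne hy
    exact hxy.not_ge (hmax ⟨⟨hay.le, hyb⟩, hy⟩)

def quintic (x : ℝ) : ℝ := 2 - 41*x + 101*x^2 - 97*x^3 + 36*x^4 - 4*x^5

theorem quintic_taylor_at_five_point_two (t : ℝ) :
    quintic (5.2 + t) =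
      -(17124/3125 + 30873/25*t + 29897/25*t^2 + 2149/5*t^3 + 68*t^4 + 4*t^5) := by
  unfold quintic; ring

theorem quintic_neg_of_ge {y : ℝ} (hy : 5.2 ≤ y) : quintic y < 0 := by
  obtain ⟨t, ht, rfl⟩ : ∃ t : ℝ, 0 ≤ t ∧ y = 5.2 + t :=
    ⟨y - 5.2, by linarith, by ring⟩
  rw [quintic_taylor_at_five_point_two, neg_lt_zero]
  positivity

theorem quintic_greatest_real_root :
    ∃ x : ℝ, (5.19 < x ∧ x < 5.20) ∧
      2 - 41*x + 101*x^2 - 97*x^3 + 36*x^4 - 4*x^5 = 0 ∧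
      ∀ y : ℝ, 2 - 41*y + 101*y^2 - 97*y^3 + 36*y^4 - 4*y^5 = 0 → y ≤ x := by
  have hpos : 0 < quintic 5.19 := by norm_num [quintic]
  obtain ⟨x, ⟨h1, h2⟩, hx, hmax⟩ :=
    exists_greatest_zero_mem_Ioo_of_pos_of_neg_Ici (by norm_num) (by unfold quintic; fun_prop)
      hpos fun _ => quintic_neg_of_ge
  exact ⟨x, ⟨h1, by linarith⟩, hx, hmax⟩
end

section
/- The rational function S(z,u) = z(1-2z)/(1-(2+u)z + u z²) satisfies S(z,u) = z / (1 - u·U(z)) where U(z) = z(1-z)/(1-2z), reflecting the decomposition of a source graph as a root together with a sequence of u-trees. -/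
theorem div_one_sub_mul_div {K : Type*} [Field K] (x u a : K) {b : K} (hb : b ≠ 0) :
    x / (1 - u * (a / b)) = x * b / (b - u * a) := by
  rw [← mul_div_assoc, one_sub_div hb, div_div_eq_mul_div]

theorem source_graph_gf_decomposition_general (z u : ℝ) (hz : z ≠ 1/2) :
    z * (1 - 2*z) / (1 - (2 + u) * z + u * z^2) =
      z / (1 - u * (z * (1 - z) / (1 - 2*z))) := by
  have hU : 1 - 2*z ≠ 0 := fun h => hz (by linarith)
  rw [div_one_sub_mul_div z u (z * (1 - z)) hU]
  ring

theorem source_graph_gf_decomposition (z u : ℝ) (hz : z ≠ 1/2)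
    (hden : 1 - (2 + u) * z + u * z^2 ≠ 0) :
    z * (1 - 2*z) / (1 - (2 + u) * z + u * z^2) =
      z / (1 - u * (z * (1 - z) / (1 - 2*z))) :=
  source_graph_gf_decomposition_general z u hz
end

section
/- The rational function S_P(z,u) = u z²(1-2z) / ((1-z)(1-(2+u)z + u z²)) satisfies S_P(z,u) = z · (1/(1 - u·U(z))) · (u·z/(1-z)) where U(z) = z(1-z)/(1-2z), reflecting the decomposition S_P = Z × Seq(u·U) × u·Seq⁺(Z). -/
/-! Clearing the denominator of the sequence construction gives
`1 - u·U(z) = (1 - (2+u)z + uz²)/(1 - 2z)`; what remains is multiplying fractions. -/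

theorem one_sub_mul_div_eq_div {K : Type*} [Field K] (u z : K) (hz : 1 - 2 * z ≠ 0) :
    1 - u * (z * (1 - z) / (1 - 2 * z)) = (1 - (2 + u) * z + u * z ^ 2) / (1 - 2 * z) := by
  rw [eq_div_iff hz, sub_mul, mul_div_assoc', div_mul_cancel₀ _ hz]
  ring

theorem source_graph_path_gf_decomposition_general (z u : ℝ) (hz2 : z ≠ 1/2) :
    u * z^2 * (1 - 2*z) / ((1 - z) * (1 - (2 + u) * z + u * z^2)) =
      z * (1 / (1 - u * (z * (1 - z) / (1 - 2*z)))) * (u * z / (1 - z)) := by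
  have h2 : (1 : ℝ) - 2 * z ≠ 0 := fun h => hz2 (by linarith)
  rw [one_sub_mul_div_eq_div u z h2, one_div_div]
  -- `(ab)⁻¹ = a⁻¹b⁻¹` holds even at zero, so both sides are the same product of inverses.
  simp only [div_eq_mul_inv, mul_inv]
  ring

theorem source_graph_path_gf_decomposition (z u : ℝ) (hz1 : z ≠ 1) (hz2 : z ≠ 1/2)
    (hden : 1 - (2 + u) * z + u * z^2 ≠ 0) :
    u * z^2 * (1 - 2*z) / ((1 - z) * (1 - (2 + u) * z + u * z^2)) =
      z * (1 / (1 - u * (z * (1 - z) / (1 - 2*z)))) * (u * z / (1 - z)) :=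
  source_graph_path_gf_decomposition_general z u hz2
end
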